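/- Let K be a commutative ring and G be any group. For x ∈ V(KG) and y ∈ V_*(KG), the conjugate x⁻¹yx belongs to V_*(KG) if and only if xx* commutes with y. -/

import Mathlib

/-- The augmentation homomorphism `χ : KG → K`. -/
noncomputable def aug (K G : Type*) [CommSemiring K] [Group G] :
    MonoidAlgebra K G →ₐ[K] K :=
  MonoidAlgebra.lift K K G 1

/-- The `K`-linear anti-automorphism of `KG` determined by `g ↦ g⁻¹`. -/
noncomputable def gstar {K G : Type*} [CommSemiring K] [Group G]
    (x : MonoidAlgebra K G) : MonoidAlgebra K G :=
  MonoidAlgebra.mapDomain (fun g : G => g⁻¹) x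

section helpers
variable {K G : Type*} [CommSemiring K] [Group G]

lemma gstar_zero : gstar (0 : MonoidAlgebra K G) = 0 := MonoidAlgebra.mapDomain_zero _

lemma gstar_add (a b : MonoidAlgebra K G) : gstar (a + b) = gstar a + gstar b :=
  MonoidAlgebra.mapDomain_add _ _ _

lemma gstar_single (g : G) (r : K) :
    gstar (MonoidAlgebra.single g r) = MonoidAlgebra.single g⁻¹ r :=
  MonoidAlgebra.mapDomain_single

lemma gstar_mul (a b : MonoidAlgebra K G) : gstar (a * b) = gstar b * gstar a := by
  induction a using MonoidAlgebra.induction_linear with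
  | zero => simp [gstar_zero]
  | add f g hf hg => rw [add_mul, gstar_add, hf, hg, gstar_add f g, mul_add]
  | single g r =>
    induction b using MonoidAlgebra.induction_linear with
    | zero => simp [gstar_zero]
    | add f g hf hg => rw [mul_add, gstar_add, hf, hg, gstar_add f g, add_mul]
    | single h s =>
      rw [MonoidAlgebra.single_mul_single, gstar_single, gstar_single, gstar_single,
        MonoidAlgebra.single_mul_single, mul_inv_rev, mul_comm r s]

lemma gstar_one : gstar (1 : MonoidAlgebra K G) = 1 := by
  rw [MonoidAlgebra.one_def, gstar_single, inv_one, ← MonoidAlgebra.one_def]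

lemma grp_aux {M : Type*} [Group M] (x xs y : M) :
    xs * y⁻¹ * xs⁻¹ = x⁻¹ * y⁻¹ * x ↔ Commute (x * xs) y := by
  rw [← Commute.inv_right_iff]
  unfold Commute SemiconjBy
  constructor
  · intro h
    have := congrArg (fun z => x * z * xs) h
    simpa [mul_assoc] using this
  · intro h
    have := congrArg (fun z => x⁻¹ * z * xs⁻¹) h
    simpa [mul_assoc] using this

end helpers

/-- Lemma 2: for a commutative ring `K` and a group `G`, if `x ∈ V(KG)` and
`y ∈ V_*(KG)`, then `x⁻¹yx ∈ V_*(KG)` if and only if `xx*` commutes with `y`. -/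
theorem stmt4 (K G : Type*) [CommRing K] [Group G]
    (x y : (MonoidAlgebra K G)ˣ)
    (hx : aug K G (x : MonoidAlgebra K G) = 1)
    (hy : aug K G (y : MonoidAlgebra K G) = 1)
    (hy' : gstar (y : MonoidAlgebra K G) = ((y⁻¹ : (MonoidAlgebra K G)ˣ) : MonoidAlgebra K G)) :
    (aug K G ((x⁻¹ * y * x : (MonoidAlgebra K G)ˣ) : MonoidAlgebra K G) = 1 ∧
      gstar ((x⁻¹ * y * x : (MonoidAlgebra K G)ˣ) : MonoidAlgebra K G) =
        (((x⁻¹ * y * x)⁻¹ : (MonoidAlgebra K G)ˣ) : MonoidAlgebra K G)) ↔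
    Commute ((x : MonoidAlgebra K G) * gstar (x : MonoidAlgebra K G))
      (y : MonoidAlgebra K G) := by
  set s := gstar (x : MonoidAlgebra K G) with hs
  set t := gstar ((x⁻¹ : (MonoidAlgebra K G)ˣ) : MonoidAlgebra K G) with ht
  have hst : s * t = 1 := by
    rw [hs, ht, ← gstar_mul, ← Units.val_mul, inv_mul_cancel x, Units.val_one, gstar_one]
  have hts : t * s = 1 := by
    rw [hs, ht, ← gstar_mul, ← Units.val_mul, mul_inv_cancel x, Units.val_one, gstar_one]
  set xs : (MonoidAlgebra K G)ˣ := ⟨s, t, hst, hts⟩ with hxs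
  -- augmentation part is automatic
  have hxinv : aug K G ((x⁻¹ : (MonoidAlgebra K G)ˣ) : MonoidAlgebra K G) = 1 := by
    have : aug K G ((x⁻¹ : (MonoidAlgebra K G)ˣ) : MonoidAlgebra K G) *
        aug K G (x : MonoidAlgebra K G) = 1 := by
      rw [← map_mul, ← Units.val_mul, inv_mul_cancel x, Units.val_one, map_one]
    rwa [hx, mul_one] at this
  have haug : aug K G ((x⁻¹ * y * x : (MonoidAlgebra K G)ˣ) : MonoidAlgebra K G) = 1 := by
    simp [Units.val_mul, map_mul, hx, hy, hxinv]
  -- the star condition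
  have hgs : gstar ((x⁻¹ * y * x : (MonoidAlgebra K G)ˣ) : MonoidAlgebra K G) =
      (xs * y⁻¹ * xs⁻¹ : (MonoidAlgebra K G)ˣ) := by
    simp only [Units.val_mul, gstar_mul, hy']
    simp [hxs, mul_assoc]
    rfl
  have hrhs : (((x⁻¹ * y * x)⁻¹ : (MonoidAlgebra K G)ˣ) : MonoidAlgebra K G) =
      ((x⁻¹ * y⁻¹ * x : (MonoidAlgebra K G)ˣ) : MonoidAlgebra K G) := by
    simp [mul_inv_rev, mul_assoc]
  have hcomm : Commute (x * xs : (MonoidAlgebra K G)ˣ) y ↔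
      Commute ((x : MonoidAlgebra K G) * s) (y : MonoidAlgebra K G) := by
    simp [Commute, SemiconjBy, Units.ext_iff, mul_assoc]
    exact Iff.rfl
  rw [hgs, hrhs]
  constructor
  · rintro ⟨-, h⟩
    have h' : (xs * y⁻¹ * xs⁻¹ : (MonoidAlgebra K G)ˣ) = x⁻¹ * y⁻¹ * x :=
      Units.ext h
    exact hcomm.mp ((grp_aux x xs y).mp h')
  · intro h
    refine ⟨haug, ?_⟩
    have h' := (grp_aux x xs y).mpr (hcomm.mpr h)
    exact congrArg Units.val h'
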